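/- For a real x ≥ 0 define Q : ℕ → ℝ → ℝ by Q 0 x = √x and Q (j+1) x = √(2 + Q j x) (real square roots), and for k ≥ 2 define R k x = √(2 − Q (k−2) x), so that R k x is a nested radical containing exactly k square roots. Then the sequence k ↦ (R k 2) / (R k 3) converges, and its limit equals 3/2. -/
import Mathlib


open Filter Real

/-- `serviQ j x = √(2 + √(2 + ⋯ + √(2 + √x)))` with `j` twos, i.e.
`serviQ 0 x = √x` and `serviQ (j+1) x = √(2 + serviQ j x)`. -/
noncomputable def serviQ : ℕ → ℝ → ℝ
  | 0, x => Real.sqrt x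
  | j + 1, x => Real.sqrt (2 + serviQ j x)

/-- `serviR k x = √(2 − serviQ (k−2) x)`: a nested radical with exactly `k`
square roots (for `k ≥ 2`). -/
noncomputable def serviR (k : ℕ) (x : ℝ) : ℝ := Real.sqrt (2 - serviQ (k - 2) x)

lemma serviQ_eq_cos (c : ℝ) (hc0 : 0 ≤ c) (hc : c ≤ π / 2) (x : ℝ)
    (hx : Real.sqrt x = 2 * Real.cos c) :
    ∀ j, serviQ j x = 2 * Real.cos (c / 2 ^ j) := by
  intro j
  induction j with
  | zero => simpa [serviQ] using hx
  | succ j ih =>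
    have h1 : 0 ≤ c / 2 ^ (j + 1) := by positivity
    have h2 : c / 2 ^ (j + 1) ≤ π / 2 := by
      calc c / 2 ^ (j + 1) ≤ c := div_le_self hc0 (one_le_pow₀ one_le_two)
        _ ≤ π / 2 := hc
    have hnn : 0 ≤ 2 * Real.cos (c / 2 ^ (j + 1)) := by
      have := Real.cos_nonneg_of_mem_Icc
        (x := c / 2 ^ (j + 1)) ⟨by linarith [Real.pi_pos], h2⟩
      linarith
    have hdbl : 2 * (c / 2 ^ (j + 1)) = c / 2 ^ j := by
      rw [pow_succ]; ring
    have key : 2 + 2 * Real.cos (c / 2 ^ j) = (2 * Real.cos (c / 2 ^ (j + 1))) ^ 2 := by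
      have hcos := Real.cos_two_mul (c / 2 ^ (j + 1))
      rw [hdbl] at hcos
      nlinarith [hcos]
    show Real.sqrt (2 + serviQ j x) = _
    rw [ih, key, Real.sqrt_sq hnn]

lemma serviR_eq_sin (c : ℝ) (hc0 : 0 ≤ c) (hc : c ≤ π / 2) (x : ℝ)
    (hx : Real.sqrt x = 2 * Real.cos c) (k : ℕ) :
    serviR (k + 2) x = 2 * Real.sin (c / 2 ^ (k + 1)) := by
  have hQ := serviQ_eq_cos c hc0 hc x hx k
  have hk : k + 2 - 2 = k := by omega
  unfold serviR
  rw [hk, hQ]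
  have h1 : 0 ≤ c / 2 ^ (k + 1) := by positivity
  have h2 : c / 2 ^ (k + 1) ≤ π := by
    calc c / 2 ^ (k + 1) ≤ c := div_le_self hc0 (one_le_pow₀ one_le_two)
      _ ≤ π / 2 := hc
      _ ≤ π := by linarith [Real.pi_pos]
  have hnn : 0 ≤ 2 * Real.sin (c / 2 ^ (k + 1)) := by
    have := Real.sin_nonneg_of_nonneg_of_le_pi h1 h2
    linarith
  have hdbl : 2 * (c / 2 ^ (k + 1)) = c / 2 ^ k := by
    rw [pow_succ]; ring
  have key : 2 - 2 * Real.cos (c / 2 ^ k) = (2 * Real.sin (c / 2 ^ (k + 1))) ^ 2 := by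
    have hcos := Real.cos_two_mul (c / 2 ^ (k + 1))
    rw [hdbl] at hcos
    have hpyth := Real.sin_sq_add_cos_sq (c / 2 ^ (k + 1))
    nlinarith [hcos, hpyth]
  rw [key, Real.sqrt_sq hnn]

/-- Servi (2002): `lim_{k→∞} R_k(2)/R_k(3) = 3/2`. -/
theorem servi_ratio_limit :
    Tendsto (fun k => serviR k 2 / serviR k 3) atTop (nhds (3 / 2)) := by
  have pi_pos := Real.pi_pos
  -- the small parameter
  set t : ℕ → ℝ := fun k => π / (12 * 2 ^ (k + 1)) with ht_def
  have htpos : ∀ k, 0 < t k := fun k => by positivity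
  have ht2lt : ∀ k, 2 * t k < π := by
    intro k
    have h24 : (24 : ℝ) ≤ 12 * 2 ^ (k + 1) := by
      have : (2:ℝ) ≤ 2 ^ (k + 1) := by
        calc (2:ℝ) = 2 ^ 1 := by norm_num
          _ ≤ 2 ^ (k + 1) := pow_le_pow_right₀ one_le_two (by omega)
      linarith
    have : t k ≤ π / 24 := by
      apply div_le_div_of_nonneg_left (le_of_lt pi_pos) (by norm_num) h24
    linarith
  have hsin2pos : ∀ k, 0 < Real.sin (2 * t k) :=
    fun k => Real.sin_pos_of_pos_of_lt_pi (by linarith [htpos k]) (ht2lt k)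
  -- R values for k+2
  have hR2 : ∀ k, serviR (k + 2) 2 = 2 * Real.sin (3 * t k) := by
    intro k
    have hx : Real.sqrt 2 = 2 * Real.cos (π / 4) := by
      rw [Real.cos_pi_div_four]; ring
    have := serviR_eq_sin (π / 4) (by positivity) (by linarith) 2 hx k
    rw [this]
    congr 1
    rw [ht_def]; field_simp; ring
  have hR3 : ∀ k, serviR (k + 2) 3 = 2 * Real.sin (2 * t k) := by
    intro k
    have hx : Real.sqrt 3 = 2 * Real.cos (π / 6) := by
      rw [Real.cos_pi_div_six]; ring
    have := serviR_eq_sin (π / 6) (by positivity) (by linarith) 3 hx k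
    rw [this]
    congr 1
    rw [ht_def]; field_simp; ring
  -- sin x / x → 1
  have hsin1 : Tendsto (fun x : ℝ => Real.sin x / x) (nhdsWithin 0 {(0:ℝ)}ᶜ) (nhds 1) := by
    have h := Real.hasDerivAt_sin 0
    rw [hasDerivAt_iff_tendsto_slope] at h
    simp only [Real.cos_zero] at h
    refine h.congr' ?_
    filter_upwards [self_mem_nhdsWithin] with x hx
    simp [slope_fun_def, Real.sin_zero]
    ring
  -- t → 0
  have ht0 : Tendsto t atTop (nhds 0) := by
    apply Tendsto.div_atTop (tendsto_const_nhds (x := π))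
    apply Tendsto.const_mul_atTop (by norm_num : (0:ℝ) < 12)
    exact (tendsto_pow_atTop_atTop_of_one_lt (by norm_num : (1:ℝ) < 2)).comp
      (tendsto_add_atTop_nat 1)
  have haux : ∀ c : ℝ, c ≠ 0 →
      Tendsto (fun k => Real.sin (c * t k) / (c * t k)) atTop (nhds 1) := by
    intro c hc
    apply hsin1.comp
    rw [tendsto_nhdsWithin_iff]
    constructor
    · have := ht0.const_mul c
      simpa using this
    · filter_upwards with k
      have := htpos k
      simp only [Set.mem_compl_iff, Set.mem_singleton_iff]
      exact mul_ne_zero hc (ne_of_gt this)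
  have hA := haux 3 (by norm_num)
  have hB := haux 2 (by norm_num)
  rw [← tendsto_add_atTop_iff_nat 2]
  have key : Tendsto
      (fun k => Real.sin (3 * t k) / (3 * t k) / (Real.sin (2 * t k) / (2 * t k)) * (3 / 2))
      atTop (nhds (3 / 2)) := by
    have := (hA.div hB (by norm_num)).mul (tendsto_const_nhds (x := (3:ℝ)/2))
    simpa using this
  refine key.congr ?_
  intro k
  rw [hR2 k, hR3 k]
  have h1 : t k ≠ 0 := ne_of_gt (htpos k)
  have h2 : Real.sin (2 * t k) ≠ 0 := ne_of_gt (hsin2pos k)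
  field_simp
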